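/- arXiv:1812.11268 — 3 statements merged into one kernel-verified Lean document; each statement's English description precedes it below -/
import Mathlib

section
/- Let X₁ and X₂ be independent nonnegative random variables. Suppose P(X₁ > x) = Θ(x^{-θ}) as x → ∞ for some θ > 0, and E[X₂^θ] < ∞ with X₂ > 0 almost surely. Then P(X₁·X₂ > x) = Θ(x^{-θ}) as x → ∞. -/
/-!
Conditioning on `X₂ = t`, `P(X₁X₂ > x) = E[F(x / X₂)]` with `F` the tail of `X₁`. A tail that is
`O(s^{-θ})` at infinity and bounded by `1` is at most `K s^{-θ}` for every `s > 0`, so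
`P(X₁X₂ > x) ≤ K x^{-θ} E[X₂^θ]`. Conversely, as `X₂ > 0` a.s. there is `a > 0` with
`p = P(X₂ ≥ a) > 0`, and independence gives `P(X₁X₂ > x) ≥ p P(X₁ > x / a) ≳ x^{-θ}`.
-/

open MeasureTheory ProbabilityTheory Filter Asymptotics Set

lemma exists_forall_le_mul_rpow_neg {F : ℝ → ℝ} {θ : ℝ} (hθ : 0 ≤ θ)
    (hF : F =O[atTop] fun s => s ^ (-θ)) (hF_le_one : ∀ s, F s ≤ 1) :
    ∃ K, 0 ≤ K ∧ ∀ s > 0, F s ≤ K * s ^ (-θ) := by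
  obtain ⟨c, hc, hcF⟩ := hF.exists_pos
  obtain ⟨b, hb⟩ := eventually_atTop.mp hcF.bound
  set b' := max b 1
  have hb' : 0 < b' := lt_of_lt_of_le one_pos (le_max_right _ _)
  refine ⟨c + b' ^ θ, by positivity, fun s hs => ?_⟩
  have hs_rpow : 0 ≤ s ^ (-θ) := Real.rpow_nonneg hs.le _
  rcases le_or_gt b' s with hsb | hsb
  · calc F s ≤ ‖F s‖ := Real.le_norm_self _
      _ ≤ c * ‖s ^ (-θ)‖ := hb s (le_trans (le_max_left _ _) hsb)
      _ = c * s ^ (-θ) := by rw [Real.norm_of_nonneg hs_rpow]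
      _ ≤ (c + b' ^ θ) * s ^ (-θ) := by gcongr; exact le_add_of_nonneg_right (by positivity)
  · calc F s ≤ 1 := hF_le_one s
      _ ≤ (b' / s) ^ θ := Real.one_le_rpow ((one_le_div hs).2 hsb.le) hθ
      _ = b' ^ θ * s ^ (-θ) := by
        rw [Real.div_rpow hb'.le hs.le, Real.rpow_neg hs.le, div_eq_mul_inv]
      _ ≤ (c + b' ^ θ) * s ^ (-θ) := by gcongr; exact le_add_of_nonneg_left hc.le

section

variable {Ω : Type*} [MeasurableSpace Ω] {μ : Measure Ω} {X Y : Ω → ℝ}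

lemma exists_pos_measure_le_ne_zero [NeZero μ] (hpos : ∀ᵐ ω ∂μ, 0 < Y ω) :
    ∃ a > 0, μ {ω | a ≤ Y ω} ≠ 0 := by
  by_contra! hnull
  have hcover : {ω | 0 < Y ω} ⊆ ⋃ n : ℕ, {ω | 1 / (n + 1 : ℝ) ≤ Y ω} := fun ω hω => by
    obtain ⟨n, hn⟩ := exists_nat_one_div_lt (show 0 < Y ω from hω)
    exact mem_iUnion.2 ⟨n, hn.le⟩
  have hzero : μ {ω | 0 < Y ω} = 0 :=
    measure_mono_null hcover (measure_iUnion_null fun n => hnull _ (by positivity))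
  obtain ⟨ω, hω, hω'⟩ := (hpos.and (measure_eq_zero_iff_ae_notMem.1 hzero)).exists
  exact hω' hω

lemma ProbabilityTheory.IndepFun.measure_lt_mul_eq_lintegral [IsFiniteMeasure μ] (hXY : IndepFun X Y μ)
    (hX : Measurable X) (hY : Measurable Y) (x : ℝ) :
    μ {ω | x < X ω * Y ω} = ∫⁻ t, μ {ω | x < X ω * t} ∂(μ.map Y) := by
  have hS : MeasurableSet {p : ℝ × ℝ | x < p.1 * p.2} :=
    measurableSet_lt measurable_const (measurable_fst.mul measurable_snd)
  have hmap := (indepFun_iff_map_prod_eq_prod_map_map hX.aemeasurable hY.aemeasurable).1 hXY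
  calc μ {ω | x < X ω * Y ω} = μ.map (fun ω => (X ω, Y ω)) {p : ℝ × ℝ | x < p.1 * p.2} := by
        rw [Measure.map_apply (hX.prodMk hY) hS]; rfl
    _ = ∫⁻ t, μ {ω | x < X ω * t} ∂(μ.map Y) := by
        rw [hmap, Measure.prod_apply_symm hS]
        refine lintegral_congr fun t => ?_
        change μ.map X {s | x < s * t} = _
        rw [Measure.map_apply hX (measurableSet_lt measurable_const (by fun_prop))]
        rfl

lemma ProbabilityTheory.IndepFun.measure_lt_mul_le [IsFiniteMeasure μ] (hXY : IndepFun X Y μ)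
    (hX : Measurable X) (hY : Measurable Y) (hpos : ∀ᵐ ω ∂μ, 0 < Y ω) {K θ x : ℝ} (hx : 0 < x)
    (hK : ∀ s > 0, μ {ω | s < X ω} ≤ ENNReal.ofReal (K * s ^ (-θ))) :
    μ {ω | x < X ω * Y ω} ≤
      ENNReal.ofReal (K * x ^ (-θ)) * ∫⁻ ω, ENNReal.ofReal (Y ω ^ θ) ∂μ := by
  have hpos_map : ∀ᵐ t ∂(μ.map Y), 0 < t :=
    (ae_map_iff hY.aemeasurable (measurableSet_lt measurable_const measurable_id)).2 hpos
  rw [hXY.measure_lt_mul_eq_lintegral hX hY, ← lintegral_map (f := fun t => ENNReal.ofReal (t ^ θ)) (by fun_prop) hY,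
    ← lintegral_const_mul _ (by fun_prop)]
  refine lintegral_mono_ae ?_
  filter_upwards [hpos_map] with t ht
  have hset : {ω | x < X ω * t} = {ω | x / t < X ω} := by
    ext ω; simp only [mem_ofPred_eq, div_lt_iff₀ ht]
  calc μ {ω | x < X ω * t} = μ {ω | x / t < X ω} := by rw [hset]
    _ ≤ ENNReal.ofReal (K * (x / t) ^ (-θ)) := hK _ (div_pos hx ht)
    _ = ENNReal.ofReal (K * x ^ (-θ)) * ENNReal.ofReal (t ^ θ) := by
      rw [← ENNReal.ofReal_mul' (Real.rpow_nonneg ht.le _), Real.div_rpow hx.le ht.le,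
        Real.rpow_neg ht.le, div_inv_eq_mul, mul_assoc]

lemma ProbabilityTheory.IndepFun.measure_lt_mul_measure_le_le (hXY : IndepFun X Y μ) {a x : ℝ} (ha : 0 < a)
    (hx : 0 ≤ x) : μ {ω | x / a < X ω} * μ {ω | a ≤ Y ω} ≤ μ {ω | x < X ω * Y ω} := by
  refine (hXY.measure_inter_preimage_eq_mul (Ioi (x / a)) (Ici a) measurableSet_Ioi
    measurableSet_Ici).symm.trans_le (measure_mono fun ω ⟨hXω, hYω⟩ => ?_)
  simp only [mem_preimage, mem_Ioi, mem_Ici] at hXω hYω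
  have hXω_pos : 0 < X ω := lt_of_le_of_lt (div_nonneg hx ha.le) hXω
  calc x = x / a * a := (div_mul_cancel₀ x ha.ne').symm
    _ < X ω * a := mul_lt_mul_of_pos_right hXω ha
    _ ≤ X ω * Y ω := mul_le_mul_of_nonneg_left hYω hXω_pos.le

lemma ProbabilityTheory.IndepFun.isBigO_measure_lt_mul [IsProbabilityMeasure μ] (hXY : IndepFun X Y μ) (hX : Measurable X)
    (hY : Measurable Y) (hpos : ∀ᵐ ω ∂μ, 0 < Y ω) {θ : ℝ} (hθ : 0 ≤ θ)
    (hXθ : (fun x => (μ {ω | x < X ω}).toReal) =O[atTop] fun x => x ^ (-θ))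
    (hmom : ∫⁻ ω, ENNReal.ofReal (Y ω ^ θ) ∂μ ≠ ⊤) :
    (fun x => (μ {ω | x < X ω * Y ω}).toReal) =O[atTop] fun x => x ^ (-θ) := by
  obtain ⟨K, hK, hKX⟩ := exists_forall_le_mul_rpow_neg hθ hXθ fun _ => measureReal_le_one
  have hKX' : ∀ s > 0, μ {ω | s < X ω} ≤ ENNReal.ofReal (K * s ^ (-θ)) := fun s hs =>
    (ENNReal.le_ofReal_iff_toReal_le (measure_ne_top _ _) (by positivity)).2 (hKX s hs)
  set M := ∫⁻ ω, ENNReal.ofReal (Y ω ^ θ) ∂μ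
  refine IsBigO.of_bound (K * M.toReal) ?_
  filter_upwards [eventually_gt_atTop 0] with x hx
  have hbound := ENNReal.toReal_mono (ENNReal.mul_ne_top ENNReal.ofReal_ne_top hmom)
    (hXY.measure_lt_mul_le hX hY hpos hx hKX')
  rw [ENNReal.toReal_mul, ENNReal.toReal_ofReal (by positivity)] at hbound
  rw [Real.norm_of_nonneg ENNReal.toReal_nonneg, Real.norm_of_nonneg (by positivity)]
  linarith

lemma ProbabilityTheory.IndepFun.isBigO_rpow_neg_measure_lt_mul [IsFiniteMeasure μ] [NeZero μ]
    (hXY : IndepFun X Y μ) (hpos : ∀ᵐ ω ∂μ, 0 < Y ω) {θ : ℝ}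
    (hXθ : (fun x => x ^ (-θ)) =O[atTop] fun x => (μ {ω | x < X ω}).toReal) :
    (fun x => x ^ (-θ)) =O[atTop] fun x => (μ {ω | x < X ω * Y ω}).toReal := by
  obtain ⟨a, ha, hp⟩ := exists_pos_measure_le_ne_zero hpos
  have hp_pos : 0 < (μ {ω | a ≤ Y ω}).toReal := ENNReal.toReal_pos hp (measure_ne_top _ _)
  have hrescale : (fun x => x ^ (-θ)) =ᶠ[atTop] fun x => a ^ (-θ) * (x / a) ^ (-θ) := by
    filter_upwards [eventually_ge_atTop 0] with x hx
    rw [← Real.mul_rpow ha.le (div_nonneg hx ha.le), mul_div_cancel₀ x ha.ne']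
  have hshift : (fun x => (μ {ω | x / a < X ω}).toReal) =O[atTop]
      fun x => (μ {ω | x < X ω * Y ω}).toReal := by
    refine IsBigO.of_bound (μ {ω | a ≤ Y ω}).toReal⁻¹ ?_
    filter_upwards [eventually_ge_atTop 0] with x hx
    have h := ENNReal.toReal_mono (measure_ne_top _ _) (hXY.measure_lt_mul_measure_le_le ha hx)
    rw [ENNReal.toReal_mul] at h
    rw [Real.norm_of_nonneg ENNReal.toReal_nonneg, Real.norm_of_nonneg ENNReal.toReal_nonneg,
      le_inv_mul_iff₀ hp_pos]
    linarith
  exact ((isBigO_const_mul_self _ _ _).congr' hrescale.symm EventuallyEq.rfl).trans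
    ((hXθ.comp_tendsto (tendsto_id.atTop_div_const ha)).trans hshift)

end

theorem stmt5_general {Ω : Type*} [MeasureSpace Ω] [IsProbabilityMeasure (ℙ : Measure Ω)]
    (X₁ X₂ : Ω → ℝ) (hm₁ : Measurable X₁) (hm₂ : Measurable X₂)
    (hindep : IndepFun X₁ X₂ ℙ)
    (θ : ℝ) (hθ : 0 < θ)
    (hΘ : (fun x : ℝ => (ℙ {ω | X₁ ω > x}).toReal) =Θ[atTop] fun x : ℝ => x ^ (-θ))
    (hmom : ∫⁻ ω, ENNReal.ofReal (X₂ ω ^ θ) < ⊤)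
    (hpos : ∀ᵐ ω ∂ℙ, 0 < X₂ ω) :
    (fun x : ℝ => (ℙ {ω | X₁ ω * X₂ ω > x}).toReal) =Θ[atTop] fun x : ℝ => x ^ (-θ) :=
  ⟨hindep.isBigO_measure_lt_mul hm₁ hm₂ hpos hθ.le hΘ.1 hmom.ne,
    hindep.isBigO_rpow_neg_measure_lt_mul hpos hΘ.2⟩

/-- If `P(X₁ > x) = Θ(x^{-θ})`, `E[X₂^θ] < ∞` and `X₂ > 0` a.s., with `X₁, X₂`
independent and nonnegative, then `P(X₁X₂ > x) = Θ(x^{-θ})`. -/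
theorem stmt5 {Ω : Type*} [MeasureSpace Ω] [IsProbabilityMeasure (ℙ : Measure Ω)]
    (X₁ X₂ : Ω → ℝ) (hm₁ : Measurable X₁) (hm₂ : Measurable X₂)
    (h₁ : ∀ ω, 0 ≤ X₁ ω) (h₂ : ∀ ω, 0 ≤ X₂ ω)
    (hindep : IndepFun X₁ X₂ ℙ)
    (θ : ℝ) (hθ : 0 < θ)
    (hΘ : (fun x : ℝ => (ℙ {ω | X₁ ω > x}).toReal) =Θ[atTop] fun x : ℝ => x ^ (-θ))
    (hmom : ∫⁻ ω, ENNReal.ofReal (X₂ ω ^ θ) < ⊤)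
    (hpos : ∀ᵐ ω ∂ℙ, 0 < X₂ ω) :
    (fun x : ℝ => (ℙ {ω | X₁ ω * X₂ ω > x}).toReal) =Θ[atTop] fun x : ℝ => x ^ (-θ) :=
  stmt5_general X₁ X₂ hm₁ hm₂ hindep θ hθ hΘ hmom hpos
end

section
/- Let X₁ and X₂ be independent nonnegative random variables. Suppose there exist θ > 0 and a function φ : ℝ≥0 → ℝ≥0 with φ(x) → ∞ and φ(x)/x → 0 as x → ∞, such that P(X₁ > x) = O(x^{-θ}), P(X₂ > φ(x)) = O(x^{-θ}), and E[X₂^θ] < ∞. Then P(X₁·X₂ > x) = O(x^{-θ}) as x → ∞. -/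
open MeasureTheory ProbabilityTheory Filter Asymptotics

/-! Conditionally on `X₂ = t`, the product exceeds `x` iff `X₁ > x / t`, which has probability at
most `C (x / t)^{-θ} = C x^{-θ} t^θ` as long as `x / t` lies in the range where the tail bound for
`X₁` holds; `φ(x) = o(x)` guarantees this for all `t ≤ φ(x)`. Integrating over `X₂` gives
`C x^{-θ} E[X₂^θ]`, and the remaining event `X₂ > φ(x)` is `O(x^{-θ})` by assumption. -/

theorem ProbabilityTheory.IndepFun.measure_setOf_prodMk_mem_eq_lintegral
    {Ω α β : Type*} [MeasurableSpace Ω] [MeasurableSpace α] [MeasurableSpace β]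
    {μ : Measure Ω} [IsFiniteMeasure μ] {X : Ω → α} {Y : Ω → β}
    (hXY : IndepFun X Y μ) (hX : Measurable X) (hY : Measurable Y)
    {s : Set (α × β)} (hs : MeasurableSet s) :
    μ {ω | (X ω, Y ω) ∈ s} = ∫⁻ ω, μ {ω' | (X ω', Y ω) ∈ s} ∂μ := by
  have hmap := (indepFun_iff_map_prod_eq_prod_map_map hX.aemeasurable hY.aemeasurable).mp hXY
  calc μ {ω | (X ω, Y ω) ∈ s} = μ.map (fun ω ↦ (X ω, Y ω)) s :=
        (Measure.map_apply (hX.prodMk hY) hs).symm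
    _ = ∫⁻ y, μ.map X ((fun x ↦ (x, y)) ⁻¹' s) ∂(μ.map Y) := by
        rw [hmap, Measure.prod_apply_symm hs]
    _ = ∫⁻ ω, μ {ω' | (X ω', Y ω) ∈ s} ∂μ := by
        rw [lintegral_map (measurable_measure_prodMk_right hs) hY]
        refine lintegral_congr fun ω ↦ ?_
        rw [Measure.map_apply hX (measurable_prodMk_right hs)]
        rfl

theorem exists_forall_ge_le_ofReal_rpow_of_isBigO {f : ℝ → ENNReal} (hf : ∀ x, f x ≠ ⊤)
    {θ : ℝ} (h : (fun x ↦ (f x).toReal) =O[atTop] fun x ↦ x ^ (-θ)) :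
    ∃ C ≥ 0, ∃ a > 0, ∀ y, a ≤ y → f y ≤ ENNReal.ofReal (C * y ^ (-θ)) := by
  obtain ⟨C, hC, hCf⟩ := h.exists_nonneg
  obtain ⟨a, ha⟩ := eventually_atTop.mp hCf.bound
  refine ⟨C, hC, max a 1, by positivity, fun y hy ↦ ?_⟩
  have hy₀ : 0 ≤ y := zero_le_one.trans (le_of_max_le_right hy)
  have := ha y (le_of_max_le_left hy)
  rw [Real.norm_of_nonneg ENNReal.toReal_nonneg, Real.norm_of_nonneg (Real.rpow_nonneg hy₀ _)]
    at this
  rw [← ENNReal.ofReal_toReal (hf y)]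
  exact ENNReal.ofReal_le_ofReal this

section ProductTail

variable {Ω : Type*} [MeasurableSpace Ω] {μ : Measure Ω} {X₁ X₂ : Ω → ℝ}
  {θ C a x s : ℝ}

theorem measure_lt_mul_const_le_ofReal_mul_rpow (hC : 0 ≤ C) (ha : 0 ≤ a)
    (htail : ∀ y, a ≤ y → μ {ω | y < X₁ ω} ≤ ENNReal.ofReal (C * y ^ (-θ)))
    (hx : 0 < x) (hsa : s * a ≤ x) {t : ℝ} (ht : 0 ≤ t) :
    μ {ω | x < X₁ ω * t ∧ t ≤ s} ≤ ENNReal.ofReal (C * x ^ (-θ)) * ENNReal.ofReal (t ^ θ) := by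
  rcases ht.eq_or_lt with rfl | ht
  · simp [hx.not_gt]
  by_cases hts : t ≤ s
  · have hset : {ω | x < X₁ ω * t ∧ t ≤ s} = {ω | x / t < X₁ ω} := by
      ext ω
      simp [div_lt_iff₀ ht, hts]
    have hat : a ≤ x / t := by
      rw [le_div_iff₀ ht]
      nlinarith
    calc μ {ω | x < X₁ ω * t ∧ t ≤ s} ≤ ENNReal.ofReal (C * (x / t) ^ (-θ)) :=
          hset ▸ htail _ hat
      _ = ENNReal.ofReal (C * x ^ (-θ)) * ENNReal.ofReal (t ^ θ) := by
          rw [← ENNReal.ofReal_mul (by positivity), Real.div_rpow hx.le ht.le,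
            Real.rpow_neg ht.le, div_inv_eq_mul, mul_assoc]
  · simp [hts]

theorem measure_lt_mul_le_ofReal_mul_lintegral_add [IsFiniteMeasure μ] (hind : IndepFun X₁ X₂ μ)
    (hm₁ : Measurable X₁) (hm₂ : Measurable X₂) (h₂ : ∀ ω, 0 ≤ X₂ ω)
    (hC : 0 ≤ C) (ha : 0 ≤ a)
    (htail : ∀ y, a ≤ y → μ {ω | y < X₁ ω} ≤ ENNReal.ofReal (C * y ^ (-θ)))
    (hx : 0 < x) (hsa : s * a ≤ x) :
    μ {ω | x < X₁ ω * X₂ ω} ≤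
      ENNReal.ofReal (C * x ^ (-θ)) * ∫⁻ ω, ENNReal.ofReal (X₂ ω ^ θ) ∂μ + μ {ω | s < X₂ ω} := by
  have hsplit : {ω | x < X₁ ω * X₂ ω} ⊆ {ω | x < X₁ ω * X₂ ω ∧ X₂ ω ≤ s} ∪ {ω | s < X₂ ω} := by
    intro ω hω
    by_cases h : X₂ ω ≤ s
    · exact Or.inl ⟨hω, h⟩
    · exact Or.inr (not_le.mp h)
  have hs : MeasurableSet {p : ℝ × ℝ | x < p.1 * p.2 ∧ p.2 ≤ s} := by measurability
  have hbody : μ {ω | x < X₁ ω * X₂ ω ∧ X₂ ω ≤ s} ≤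
      ENNReal.ofReal (C * x ^ (-θ)) * ∫⁻ ω, ENNReal.ofReal (X₂ ω ^ θ) ∂μ := by
    rw [← lintegral_const_mul _ (by fun_prop)]
    calc μ {ω | x < X₁ ω * X₂ ω ∧ X₂ ω ≤ s}
        = ∫⁻ ω, μ {ω' | x < X₁ ω' * X₂ ω ∧ X₂ ω ≤ s} ∂μ :=
          hind.measure_setOf_prodMk_mem_eq_lintegral hm₁ hm₂ hs
      _ ≤ _ := lintegral_mono fun ω ↦
          measure_lt_mul_const_le_ofReal_mul_rpow hC ha htail hx hsa (h₂ ω)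
  calc μ {ω | x < X₁ ω * X₂ ω}
      ≤ μ {ω | x < X₁ ω * X₂ ω ∧ X₂ ω ≤ s} + μ {ω | s < X₂ ω} :=
        (measure_mono hsplit).trans (measure_union_le _ _)
    _ ≤ _ := by gcongr

end ProductTail

theorem stmt7_general {Ω : Type*} [MeasureSpace Ω] [IsProbabilityMeasure (ℙ : Measure Ω)]
    (X₁ X₂ : Ω → ℝ) (hm₁ : Measurable X₁) (hm₂ : Measurable X₂)
    (h₂ : ∀ ω, 0 ≤ X₂ ω)
    (hindep : IndepFun X₁ X₂ ℙ)
    (θ : ℝ)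
    (φ : ℝ → ℝ)
    (hφo : Tendsto (fun x => φ x / x) atTop (nhds 0))
    (hO₁ : (fun x : ℝ => (ℙ {ω | X₁ ω > x}).toReal) =O[atTop] fun x : ℝ => x ^ (-θ))
    (hO₂ : (fun x : ℝ => (ℙ {ω | X₂ ω > φ x}).toReal) =O[atTop] fun x : ℝ => x ^ (-θ))
    (hmom : ∫⁻ ω, ENNReal.ofReal (X₂ ω ^ θ) < ⊤) :
    (fun x : ℝ => (ℙ {ω | X₁ ω * X₂ ω > x}).toReal) =O[atTop] fun x : ℝ => x ^ (-θ) := by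
  obtain ⟨C, hC, a, ha, htail⟩ :=
    exists_forall_ge_le_ofReal_rpow_of_isBigO (fun _ ↦ measure_ne_top _ _) hO₁
  set M := (∫⁻ ω, ENNReal.ofReal (X₂ ω ^ θ)).toReal
  have hbound : ∀ᶠ x in atTop, (ℙ {ω | X₁ ω * X₂ ω > x}).toReal ≤
      C * M * x ^ (-θ) + (ℙ {ω | X₂ ω > φ x}).toReal := by
    filter_upwards [eventually_gt_atTop 0, hφo.eventually (gt_mem_nhds (inv_pos.mpr ha))]
      with x hx hφx
    have hφa : φ x * a ≤ x := by
      rw [div_lt_iff₀ hx, inv_mul_eq_div, lt_div_iff₀ ha] at hφx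
      exact hφx.le
    have := measure_lt_mul_le_ofReal_mul_lintegral_add hindep hm₁ hm₂ h₂ hC ha.le htail hx hφa
    rw [← ENNReal.ofReal_toReal hmom.ne, ← ENNReal.ofReal_mul (by positivity),
      ← ENNReal.ofReal_toReal (measure_ne_top _ {ω | φ x < X₂ ω}),
      ← ENNReal.ofReal_add (by positivity) ENNReal.toReal_nonneg] at this
    calc (ℙ {ω | X₁ ω * X₂ ω > x}).toReal ≤ _ := ENNReal.toReal_le_of_le_ofReal (by positivity) this
      _ = _ := by ring
  refine (IsBigO.of_bound' ?_).trans (((isBigO_refl _ _).const_mul_left (C * M)).add hO₂)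
  filter_upwards [hbound] with x hx
  rwa [Real.norm_of_nonneg ENNReal.toReal_nonneg,
    Real.norm_of_nonneg (ENNReal.toReal_nonneg.trans hx)]

/-- If `P(X₁ > x) = O(x^{-θ})`, `P(X₂ > φ(x)) = O(x^{-θ})` for a function `φ` with
`φ(x) → ∞`, `φ(x)/x → 0`, and `E[X₂^θ] < ∞`, then `P(X₁X₂ > x) = O(x^{-θ})`. -/
theorem stmt7 {Ω : Type*} [MeasureSpace Ω] [IsProbabilityMeasure (ℙ : Measure Ω)]
    (X₁ X₂ : Ω → ℝ) (hm₁ : Measurable X₁) (hm₂ : Measurable X₂)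
    (h₁ : ∀ ω, 0 ≤ X₁ ω) (h₂ : ∀ ω, 0 ≤ X₂ ω)
    (hindep : IndepFun X₁ X₂ ℙ)
    (θ : ℝ) (hθ : 0 < θ)
    (φ : ℝ → ℝ) (hφ0 : ∀ x, 0 ≤ φ x)
    (hphitop : Tendsto φ atTop atTop)
    (hφo : Tendsto (fun x => φ x / x) atTop (nhds 0))
    (hO₁ : (fun x : ℝ => (ℙ {ω | X₁ ω > x}).toReal) =O[atTop] fun x : ℝ => x ^ (-θ))
    (hO₂ : (fun x : ℝ => (ℙ {ω | X₂ ω > φ x}).toReal) =O[atTop] fun x : ℝ => x ^ (-θ))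
    (hmom : ∫⁻ ω, ENNReal.ofReal (X₂ ω ^ θ) < ⊤) :
    (fun x : ℝ => (ℙ {ω | X₁ ω * X₂ ω > x}).toReal) =O[atTop] fun x : ℝ => x ^ (-θ) :=
  stmt7_general X₁ X₂ hm₁ hm₂ h₂ hindep θ φ hφo hO₁ hO₂ hmom
end

section
/- Let X₁ and X₂ be independent nonnegative random variables and let F̄₁(x) = P(X₁ > x). Suppose there exists a function φ : ℝ≥0 → ℝ≥0 with φ(x) → ∞ and φ(x)/x → 0 as x → ∞, such that P(X₂ > φ(x)) = O(F̄₁(x)) and F̄₁(x/φ(x)) = O(F̄₁(x)). Then P(X₁·X₂ > x) = O(F̄₁(x)) as x → ∞. -/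
open MeasureTheory ProbabilityTheory Filter Asymptotics

/-- Tail upper bound for the product of two independent nonnegative random variables:
if `P(X₂ > φ(x)) = O(F̄₁(x))` and `F̄₁(x/φ(x)) = O(F̄₁(x))` for some `φ` with
`φ(x) → ∞` and `φ(x)/x → 0`, then `P(X₁X₂ > x) = O(F̄₁(x))`. -/
theorem stmt8 {Ω : Type*} [MeasureSpace Ω] [IsProbabilityMeasure (ℙ : Measure Ω)]
    (X₁ X₂ : Ω → ℝ) (hm₁ : Measurable X₁) (hm₂ : Measurable X₂)
    (h₁ : ∀ ω, 0 ≤ X₁ ω) (h₂ : ∀ ω, 0 ≤ X₂ ω)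
    (hindep : IndepFun X₁ X₂ ℙ)
    (φ : ℝ → ℝ) (hφ0 : ∀ x, 0 ≤ φ x)
    (hphitop : Tendsto φ atTop atTop)
    (hφo : Tendsto (fun x => φ x / x) atTop (nhds 0))
    (hO₂ : (fun x : ℝ => (ℙ {ω | X₂ ω > φ x}).toReal)
      =O[atTop] fun x : ℝ => (ℙ {ω | X₁ ω > x}).toReal)
    (hO₁ : (fun x : ℝ => (ℙ {ω | X₁ ω > x / φ x}).toReal)
      =O[atTop] fun x : ℝ => (ℙ {ω | X₁ ω > x}).toReal) :
    (fun x : ℝ => (ℙ {ω | X₁ ω * X₂ ω > x}).toReal)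
      =O[atTop] fun x : ℝ => (ℙ {ω | X₁ ω > x}).toReal := by
  have key : (fun x : ℝ => (ℙ {ω | X₁ ω * X₂ ω > x}).toReal)
      =O[atTop] fun x : ℝ => (ℙ {ω | X₂ ω > φ x}).toReal
        + (ℙ {ω | X₁ ω > x / φ x}).toReal := by
    apply IsBigO.of_bound 1
    filter_upwards [hphitop.eventually_gt_atTop 0] with x hx
    have hsub : {ω | X₁ ω * X₂ ω > x} ⊆ {ω | X₂ ω > φ x} ∪ {ω | X₁ ω > x / φ x} := by
      intro ω hω
      by_cases h : X₂ ω > φ x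
      · exact Or.inl h
      · right
        push_neg at h
        have : X₁ ω * φ x > x :=
          lt_of_lt_of_le hω (mul_le_mul_of_nonneg_left h (h₁ ω))
        exact (div_lt_iff₀ hx).mpr this
    have hle : ℙ {ω | X₁ ω * X₂ ω > x}
        ≤ ℙ {ω | X₂ ω > φ x} + ℙ {ω | X₁ ω > x / φ x} :=
      le_trans (measure_mono hsub) (measure_union_le _ _)
    have h1 : (ℙ {ω | X₁ ω * X₂ ω > x}).toReal
        ≤ (ℙ {ω | X₂ ω > φ x}).toReal + (ℙ {ω | X₁ ω > x / φ x}).toReal := by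
      rw [← ENNReal.toReal_add (measure_ne_top _ _) (measure_ne_top _ _)]
      exact ENNReal.toReal_mono (by finiteness) hle
    rw [one_mul, Real.norm_eq_abs, Real.norm_eq_abs, abs_of_nonneg ENNReal.toReal_nonneg]
    exact h1.trans (le_abs_self _)
  exact key.trans (hO₂.add hO₁)
end
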